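/- arXiv:math/9506213 — 2 statements merged into one kernel-verified Lean document; each statement's English description precedes it below -/
import Mathlib

section
/- For every real κ ≥ 1 there exists κ' ≥ 1, depending only on κ, with the following property: if (r_u, r_v, r_w) and (s_u, s_v, s_w) are two triples of positive reals with 1/κ ≤ (s_x/r_x)/(s_y/r_y) ≤ κ for all x, y ∈ {u,v,w}, and α (resp. β) denotes the angle at the vertex corresponding to v in the triangle with side lengths r_v+r_u, r_v+r_w, r_u+r_w (resp. s_v+s_u, s_v+s_w, s_u+s_w), then (1/κ')·β ≤ α ≤ κ'·β. -/
open Real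

lemma arccos_eq_two_arcsin_sqrt {t : ℝ} (h0 : 0 ≤ t) (h1 : t ≤ 1) :
    Real.arccos (1 - 2*t) = 2 * Real.arcsin (Real.sqrt t) := by
  have hs0 : 0 ≤ Real.sqrt t := Real.sqrt_nonneg t
  have hs1 : Real.sqrt t ≤ 1 := Real.sqrt_le_one.mpr h1
  have ha0 : 0 ≤ Real.arcsin (Real.sqrt t) := Real.arcsin_nonneg.2 hs0
  have ha1 : Real.arcsin (Real.sqrt t) ≤ π/2 := Real.arcsin_le_pi_div_two _
  have hcos : Real.cos (2 * Real.arcsin (Real.sqrt t)) = 1 - 2*t := by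
    rw [Real.cos_two_mul, Real.cos_arcsin]
    rw [Real.sq_sqrt (by nlinarith : (0:ℝ) ≤ 1 - Real.sqrt t ^ 2)]
    rw [Real.sq_sqrt h0]
    ring
  rw [← hcos, Real.arccos_cos (by linarith) (by linarith)]

lemma arcsin_le' (x : ℝ) (h0 : 0 ≤ x) (h1 : x ≤ 1) : Real.arcsin x ≤ π/2 * x := by
  have h := Real.mul_le_sin (Real.arcsin_nonneg.2 h0) (Real.arcsin_le_pi_div_two x)
  rw [Real.sin_arcsin (by linarith) h1] at h
  have hπ : (0:ℝ) < π := Real.pi_pos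
  have h' := mul_le_mul_of_nonneg_left h (by positivity : (0:ℝ) ≤ π/2)
  have he : π/2 * (2/π * Real.arcsin x) = Real.arcsin x := by field_simp
  linarith

lemma le_arcsin' (x : ℝ) (h0 : 0 ≤ x) (h1 : x ≤ 1) : x ≤ Real.arcsin x := by
  have := Real.sin_le (Real.arcsin_nonneg.2 h0)
  rwa [Real.sin_arcsin (by linarith) h1] at this

lemma key (κ t s : ℝ) (hκ : 1 ≤ κ) (ht0 : 0 ≤ t) (ht1 : t ≤ 1) (hs0 : 0 ≤ s) (hs1 : s ≤ 1)
    (h : t ≤ κ^2 * s) :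
    Real.arccos (1 - 2*t) ≤ (π * κ / 2) * Real.arccos (1 - 2*s) := by
  have hπ : (0:ℝ) < π := Real.pi_pos
  rw [arccos_eq_two_arcsin_sqrt ht0 ht1, arccos_eq_two_arcsin_sqrt hs0 hs1]
  have h1 : Real.sqrt t ≤ κ * Real.sqrt s := by
    have h' := Real.sqrt_le_sqrt h
    rwa [Real.sqrt_mul (by positivity) s, Real.sqrt_sq (by linarith)] at h'
  have h2 : Real.arcsin (Real.sqrt t) ≤ π/2 * Real.sqrt t :=
    arcsin_le' _ (Real.sqrt_nonneg t) (Real.sqrt_le_one.mpr ht1)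
  have h3 : Real.sqrt s ≤ Real.arcsin (Real.sqrt s) :=
    le_arcsin' _ (Real.sqrt_nonneg s) (Real.sqrt_le_one.mpr hs1)
  calc 2 * Real.arcsin (Real.sqrt t) ≤ π * Real.sqrt t := by linarith
    _ ≤ π * (κ * Real.sqrt s) := mul_le_mul_of_nonneg_left h1 hπ.le
    _ = (π * κ / 2) * (2 * Real.sqrt s) := by ring
    _ ≤ (π * κ / 2) * (2 * Real.arcsin (Real.sqrt s)) := by
        apply mul_le_mul_of_nonneg_left (by linarith) (by positivity)

lemma ratio (κ : ℝ) (hκ : 1 ≤ κ) (a b c d e f : ℝ)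
    (ha : 0 < a) (hb : 0 < b) (hc : 0 < c) (hd : 0 < d) (he : 0 < e) (hf : 0 < f)
    (h1 : (d/a)/(e/b) ≤ κ) (h2 : (f/c)/(e/b) ≤ κ) :
    d*f/((e+d)*(e+f)) ≤ κ^2 * (a*c/((b+a)*(b+c))) := by
  have hκ0 : (0:ℝ) < κ := by linarith
  have k1 : d * b ≤ κ * (a * e) := by
    have e1 : d / a / (e / b) = d * b / (a * e) := by field_simp
    rw [e1, div_le_iff₀ (by positivity)] at h1
    linarith
  have k2 : f * b ≤ κ * (c * e) := by
    have e1 : f / c / (e / b) = f * b / (c * e) := by field_simp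
    rw [e1, div_le_iff₀ (by positivity)] at h2
    linarith
  have g1 : d/(e+d) ≤ κ*a/(b+a) := by
    rw [div_le_div_iff₀ (by positivity) (by positivity)]
    nlinarith [mul_nonneg (mul_nonneg (sub_nonneg.2 hκ) ha.le) hd.le]
  have g2 : f/(e+f) ≤ κ*c/(b+c) := by
    rw [div_le_div_iff₀ (by positivity) (by positivity)]
    nlinarith [mul_nonneg (mul_nonneg (sub_nonneg.2 hκ) hc.le) hf.le]
  have e1 : d*f/((e+d)*(e+f)) = (d/(e+d)) * (f/(e+f)) := by field_simp
  have e2 : κ^2 * (a*c/((b+a)*(b+c))) = (κ*a/(b+a)) * (κ*c/(b+c)) := by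
    field_simp
  rw [e1, e2]
  exact mul_le_mul g1 g2 (by positivity) (by positivity)


/-- **Uniform angle comparison (key step in Corollary 3.2).**
For every `κ ≥ 1` there is `κ' ≥ 1`, depending only on `κ`, such that for all triples
`r = (r 0, r 1, r 2)` and `s = (s 0, s 1, s 2)` of positive reals (radii indexed by
`u = 0`, `v = 1`, `w = 2`) with `1/κ ≤ (s x / r x)/(s y / r y) ≤ κ` for all indices
`x, y`, the interior angles at the vertex `v` of the triangles with side lengths
`r v + r u, r v + r w, r u + r w` and `s v + s u, s v + s w, s u + s w`
(given by `α = arccos (1 − 2 r u r w/((r v + r u)(r v + r w)))`, and similarly `β`)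
satisfy `(1/κ')·β ≤ α ≤ κ'·β`. -/
theorem stmt_3 : ∀ κ : ℝ, 1 ≤ κ → ∃ κ' : ℝ, 1 ≤ κ' ∧
    ∀ r s : Fin 3 → ℝ, (∀ i, 0 < r i) → (∀ i, 0 < s i) →
    (∀ x y : Fin 3, 1 / κ ≤ (s x / r x) / (s y / r y) ∧ (s x / r x) / (s y / r y) ≤ κ) →
    (1 / κ') * Real.arccos (1 - 2 * s 0 * s 2 / ((s 1 + s 0) * (s 1 + s 2))) ≤
        Real.arccos (1 - 2 * r 0 * r 2 / ((r 1 + r 0) * (r 1 + r 2))) ∧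
      Real.arccos (1 - 2 * r 0 * r 2 / ((r 1 + r 0) * (r 1 + r 2))) ≤
        κ' * Real.arccos (1 - 2 * s 0 * s 2 / ((s 1 + s 0) * (s 1 + s 2))) := by
  intro κ hκ
  have hπ : (0:ℝ) < π := Real.pi_pos
  have hπ2 : (2:ℝ) ≤ π := by linarith [Real.pi_gt_three]
  refine ⟨π * κ / 2, by nlinarith, ?_⟩
  intro r s hr hs hrs
  have hr0 := hr 0; have hr1 := hr 1; have hr2 := hr 2
  have hs0 := hs 0; have hs1 := hs 1; have hs2 := hs 2
  set tr := r 0 * r 2 / ((r 1 + r 0) * (r 1 + r 2)) with htr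
  set ts := s 0 * s 2 / ((s 1 + s 0) * (s 1 + s 2)) with hts
  have er : 1 - 2 * r 0 * r 2 / ((r 1 + r 0) * (r 1 + r 2)) = 1 - 2 * tr := by
    rw [htr]; ring
  have es : 1 - 2 * s 0 * s 2 / ((s 1 + s 0) * (s 1 + s 2)) = 1 - 2 * ts := by
    rw [hts]; ring
  have htr0 : 0 ≤ tr := by rw [htr]; positivity
  have hts0 : 0 ≤ ts := by rw [hts]; positivity
  have htr1 : tr ≤ 1 := by
    rw [htr, div_le_one (by positivity)]; nlinarith
  have hts1 : ts ≤ 1 := by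
    rw [hts, div_le_one (by positivity)]; nlinarith
  -- t_r ≤ κ² t_s
  have c1 : (r 0 / s 0) / (r 1 / s 1) ≤ κ := by
    have h := (hrs 1 0).2
    have e : (r 0 / s 0) / (r 1 / s 1) = (s 1 / r 1) / (s 0 / r 0) := by
      field_simp
    rw [e]; exact h
  have c2 : (r 2 / s 2) / (r 1 / s 1) ≤ κ := by
    have h := (hrs 1 2).2
    have e : (r 2 / s 2) / (r 1 / s 1) = (s 1 / r 1) / (s 2 / r 2) := by
      field_simp
    rw [e]; exact h
  have c3 : (s 0 / r 0) / (s 1 / r 1) ≤ κ := (hrs 0 1).2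
  have c4 : (s 2 / r 2) / (s 1 / r 1) ≤ κ := (hrs 2 1).2
  have hrs1 : tr ≤ κ^2 * ts := by
    rw [htr, hts]
    exact ratio κ hκ (s 0) (s 1) (s 2) (r 0) (r 1) (r 2) hs0 hs1 hs2 hr0 hr1 hr2 c1 c2
  have hrs2 : ts ≤ κ^2 * tr := by
    rw [htr, hts]
    exact ratio κ hκ (r 0) (r 1) (r 2) (s 0) (s 1) (s 2) hr0 hr1 hr2 hs0 hs1 hs2 c3 c4
  rw [er, es]
  have K1 := key κ tr ts hκ htr0 htr1 hts0 hts1 hrs1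
  have K2 := key κ ts tr hκ hts0 hts1 htr0 htr1 hrs2
  constructor
  · rw [div_mul_eq_mul_div, div_le_iff₀ (by positivity : (0:ℝ) < π * κ / 2)]
    linarith
  · exact K1
end

section
/- Let C_v be a circle of radius r_v > 0 and let C_u, C_w be circles of radii r_u, r_w externally tangent to C_v and to each other. If r_v/r_u ≥ n and r_v/r_w ≥ n, then the angle α at the center of C_v in the triangle of centers satisfies α ≤ 2·arcsin(1/n). In particular α → 0 as n → ∞. -/
/-- **Quantitative angle collapse ((5.5)–(5.6) in the paper).**
If circles of radii `ru, rw` are externally tangent to a circle of radius `rv` and to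
each other, and `rv/ru ≥ n`, `rv/rw ≥ n`, then the angle
`α = arccos (1 − 2 ru rw/((rv + ru)(rv + rw)))` at the centre of the `rv`-circle in the
triangle of centres satisfies `α ≤ 2·arcsin (1/n)`; in particular `α → 0` as `n → ∞`. -/
theorem stmt_4 (n : ℕ) (hn : 1 ≤ n) (ru rv rw : ℝ)
    (hru : 0 < ru) (hrv : 0 < rv) (hrw : 0 < rw)
    (hu : (n : ℝ) ≤ rv / ru) (hw : (n : ℝ) ≤ rv / rw) :
    Real.arccos (1 - 2 * ru * rw / ((rv + ru) * (rv + rw))) ≤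
      2 * Real.arcsin (1 / n) := by
  have hn' : (1 : ℝ) ≤ (n : ℝ) := by exact_mod_cast hn
  have hnpos : (0 : ℝ) < n := lt_of_lt_of_le one_pos hn'
  have hx0 : (0 : ℝ) ≤ 1 / n := by positivity
  have hx1 : (1 : ℝ) / n ≤ 1 := by
    rw [div_le_one hnpos]; exact hn'
  -- 2 arcsin x = arccos (1 - 2 x^2)
  have key : 2 * Real.arcsin (1 / n) = Real.arccos (1 - 2 * (1 / n) ^ 2) := by
    have h1 : (0 : ℝ) ≤ 2 * Real.arcsin (1 / n) := by
      have := Real.arcsin_nonneg.2 hx0; linarith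
    have h2 : 2 * Real.arcsin (1 / n) ≤ Real.pi := by
      have := Real.arcsin_le_pi_div_two (1 / n); linarith
    have hcos : Real.cos (2 * Real.arcsin (1 / n)) = 1 - 2 * (1 / n) ^ 2 := by
      rw [Real.cos_two_mul']
      have hs := Real.sin_arcsin (by linarith : (-1 : ℝ) ≤ 1 / n) hx1
      have hp := Real.sin_sq_add_cos_sq (Real.arcsin (1 / n))
      rw [hs] at hp
      rw [hs]
      linarith
    rw [← hcos, Real.arccos_cos h1 h2]
  rw [key]
  -- antitone arccos via arccos = π/2 - arcsin
  have hmono : ∀ a b : ℝ, a ≤ b → Real.arccos b ≤ Real.arccos a := by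
    intro a b hab
    unfold Real.arccos
    linarith [Real.monotone_arcsin hab]
  apply hmono
  -- need 1 - 2/n^2 ≤ 1 - 2 ru rw /((rv+ru)(rv+rw))
  have hru' : (n : ℝ) * ru ≤ rv := (le_div_iff₀ hru).mp hu
  have hrw' : (n : ℝ) * rw ≤ rv := (le_div_iff₀ hrw).mp hw
  have h1 : ru * rw / ((rv + ru) * (rv + rw)) ≤ (1 / n) ^ 2 := by
    have hden : (0 : ℝ) < (rv + ru) * (rv + rw) := by positivity
    rw [div_le_iff₀ hden]
    have e : (1 / (n:ℝ)) ^ 2 * ((rv + ru) * (rv + rw))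
        = ((rv + ru) / n) * ((rv + rw) / n) := by ring
    rw [e]
    have ha : ru ≤ (rv + ru) / n := by
      rw [le_div_iff₀ hnpos]; nlinarith
    have hb : rw ≤ (rv + rw) / n := by
      rw [le_div_iff₀ hnpos]; nlinarith
    have hbpos : (0:ℝ) ≤ rw := hrw.le
    nlinarith
  have e2 : 2 * ru * rw / ((rv + ru) * (rv + rw))
      = 2 * (ru * rw / ((rv + ru) * (rv + rw))) := by ring
  rw [e2]
  linarith
end
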